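/- For every positive integer m, the proportional choice number of the star K_{1,m} equals 1 + ⌈m/2⌉. -/

import Mathlib

open Finset

/-- The multiplicity of a color `c` in a list assignment `L`: the number of
vertices whose list contains `c`. -/
def eta {V : Type*} [Fintype V] (L : V → Finset ℕ) (c : ℕ) : ℕ :=
  (Finset.univ.filter fun v => c ∈ L v).card

/-- `f` is a proportional `L`-coloring of `G` (with lists of size `k`): a proper
`L`-coloring in which each color `c` of the palette is used `⌊η(c)/k⌋` or `⌈η(c)/k⌉` times. -/
def IsProportionalColoring {V : Type*} [Fintype V] (G : SimpleGraph V) (k : ℕ)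
    (L : V → Finset ℕ) (f : V → ℕ) : Prop :=
  (∀ v, f v ∈ L v) ∧ (∀ u v, G.Adj u v → f u ≠ f v) ∧
  ∀ c, (∃ v, c ∈ L v) →
    (Finset.univ.filter fun v => f v = c).card = eta L c / k ∨
    (Finset.univ.filter fun v => f v = c).card = (eta L c + k - 1) / k

/-- `G` is proportionally `k`-choosable: every `k`-assignment admits a proportional coloring. -/
def ProportionallyChoosable {V : Type*} [Fintype V] (G : SimpleGraph V) (k : ℕ) : Prop :=
  ∀ L : V → Finset ℕ, (∀ v, (L v).card = k) → ∃ f : V → ℕ, IsProportionalColoring G k L f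

/-- The proportional choice number: the least `k` such that `G` is
proportionally `k`-choosable. -/
noncomputable def propChoiceNumber {V : Type*} [Fintype V] (G : SimpleGraph V) : ℕ :=
  sInf {k | ProportionallyChoosable G k}

/-! Let the star have `m` leaves and let the lists have size `k`. When `2k ≥ m + 2` every
multiplicity is at most `2k - 1`, so a proportional colouring must use each colour `c` between
`⌊η(c)/k⌋ ≤ 1` and `⌈η(c)/k⌉ ≤ 2` times. The colour `c₀` of the centre is used once, which is always
admissible; the leaves then need colours from their lists minus `c₀`, each colour `c` used at most
`⌈η(c)/k⌉` times and at least once when `η(c) ≥ k`. This is a capacitated matching problem solved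
by Hall's theorem, and a double count shows that `c₀` can be chosen so that Hall's condition holds.
When `2k ≤ m + 1`, giving every vertex the same list forces the centre's colour, which appears in
all `m + 1` lists, to be used at least twice. -/

theorem Finset.exists_injective_surj_of_hall {κ β : Type*} [Fintype κ] [DecidableEq β]
    (t : κ → Finset β) (S : Finset β) (htS : ∀ x, t x ⊆ S) (hcard : #S ≤ Fintype.card κ)
    (hall : ∀ W : Finset κ, #W ≤ #(W.biUnion t)) :
    ∃ f : κ → β, Function.Injective f ∧ (∀ x, f x ∈ t x) ∧ ∀ b ∈ S, ∃ x, f x = b := by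
  classical
  obtain ⟨f, hinj, hf⟩ := (all_card_le_biUnion_card_iff_exists_injective t).1 hall
  have himage : univ.image f = S :=
    eq_of_subset_of_card_le (fun b hb => by
      obtain ⟨x, -, rfl⟩ := mem_image.1 hb
      exact htS x (hf x)) (by rwa [card_image_of_injective _ hinj, card_univ])
  refine ⟨f, hinj, hf, fun b hb => ?_⟩
  rw [← himage] at hb
  simpa using hb

section Capacitated

variable {ι α : Type*} [Fintype ι] [DecidableEq α]

/- Colour `c` is split into `s c` slots `⟨c, j⟩`, and `i` may take any slot of a colour of `N i`.
The `D` dummies may take any slot except the mandatory ones `⟨c, 0⟩`, `c ∈ M`; once `D` is chosen so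
that there are exactly as many slots as vertices, a matching saturating all vertices uses every
slot, so the mandatory slots all go to genuine vertices. -/
def slotNeighbors (N : ι → Finset α) (s : α → ℕ) (M : Finset α) (D : ℕ) :
    ι ⊕ Fin D → Finset ((_ : α) × ℕ) :=
  Sum.elim (fun i => (N i).sigma fun c => range (s c))
    fun _ => ((univ.biUnion N).sigma fun c => range (s c)) \ M.image fun c => ⟨c, 0⟩

lemma hall_slotNeighbors (N : ι → Finset α) (s : α → ℕ) (M : Finset α) (D : ℕ)
    (hall : ∀ W : Finset ι, #W ≤ ∑ c ∈ W.biUnion N, s c)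
    (hcover : ∀ W : Finset ι, #W + #(M \ W.biUnion N) ≤ Fintype.card ι)
    (hD : D + Fintype.card ι = ∑ c ∈ univ.biUnion N, s c) (W : Finset (ι ⊕ Fin D)) :
    #W ≤ #(W.biUnion (slotNeighbors N s M D)) := by
  classical
  have hslots (C : Finset α) : #(C.sigma fun c => range (s c)) = ∑ c ∈ C, s c := by
    simp [card_sigma]
  set NW := W.toLeft.biUnion N
  have hallW : #W.toLeft ≤ ∑ c ∈ NW, s c := hall W.toLeft
  have hleft : NW.sigma (fun c => range (s c)) ⊆ W.biUnion (slotNeighbors N s M D) := by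
    intro p hp
    obtain ⟨i, hi, hpi⟩ := mem_biUnion.1 (mem_sigma.1 hp).1
    exact mem_biUnion.2 ⟨.inl i, mem_toLeft.1 hi, mem_sigma.2 ⟨hpi, (mem_sigma.1 hp).2⟩⟩
  have hsplit := card_toLeft_add_card_toRight (u := W)
  rcases W.toRight.eq_empty_or_nonempty with hW | ⟨d, hd⟩
  · have := card_le_card hleft
    rw [hslots] at this
    rw [hW, card_empty] at hsplit
    omega
  · have hcovered : ((univ.biUnion N).sigma fun c => range (s c)) \
        (M \ NW).image (fun c => ⟨c, 0⟩) ⊆ W.biUnion (slotNeighbors N s M D) := by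
      intro p hp
      obtain ⟨hpU, hpM⟩ := mem_sdiff.1 hp
      by_cases hpmand : p ∈ M.image fun c => ⟨c, 0⟩
      · obtain ⟨c, hcM, rfl⟩ := mem_image.1 hpmand
        have hc : c ∈ NW := by
          by_contra hc
          exact hpM (mem_image_of_mem _ (mem_sdiff.2 ⟨hcM, hc⟩))
        exact hleft (mem_sigma.2 ⟨hc, (mem_sigma.1 hpU).2⟩)
      · exact mem_biUnion.2 ⟨.inr d, mem_toRight.1 hd, mem_sdiff.2 ⟨hpU, hpmand⟩⟩
    have hsdiff := le_card_sdiff ((M \ NW).image (fun c => (⟨c, 0⟩ : (_ : α) × ℕ)))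
      ((univ.biUnion N).sigma fun c => range (s c))
    have hcovered_card := card_le_card hcovered
    have hmissing : #((M \ NW).image (fun c => (⟨c, 0⟩ : (_ : α) × ℕ))) ≤ _ := card_image_le
    have hcoverW : #W.toLeft + #(M \ NW) ≤ Fintype.card ι := hcover W.toLeft
    have hdummies : #W.toRight ≤ D := by simpa using card_le_univ W.toRight
    rw [hslots] at hsdiff
    omega

theorem exists_capacitated_assignment (N : ι → Finset α) (s : α → ℕ) (M : Finset α)
    (hM : ∀ c ∈ M, 0 < s c)
    (hall : ∀ W : Finset ι, #W ≤ ∑ c ∈ W.biUnion N, s c)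
    (hcover : ∀ W : Finset ι, #W + #(M \ W.biUnion N) ≤ Fintype.card ι) :
    ∃ g : ι → α, (∀ i, g i ∈ N i) ∧ (∀ c, #{i | g i = c} ≤ s c) ∧ ∀ c ∈ M, ∃ i, g i = c := by
  classical
  set S := (univ.biUnion N).sigma fun c => range (s c)
  set D := #S - Fintype.card ι
  have hScard : #S = ∑ c ∈ univ.biUnion N, s c := by simp [S, card_sigma]
  have hD : D + Fintype.card ι = #S := by
    have := hall univ
    rw [card_univ] at this
    omega
  have hS : ∀ x, slotNeighbors N s M D x ⊆ S := by
    rintro (i | d) p hp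
    · obtain ⟨hpN, hps⟩ := mem_sigma.1 hp
      exact mem_sigma.2 ⟨mem_biUnion.2 ⟨i, mem_univ i, hpN⟩, hps⟩
    · exact (mem_sdiff.1 hp).1
  obtain ⟨f, hinj, hf, hsurj⟩ := exists_injective_surj_of_hall _ S hS
    (by simp; omega) (hall_slotNeighbors N s M D hall hcover (hScard ▸ hD))
  refine ⟨fun i => (f (.inl i)).1, fun i => (mem_sigma.1 (hf (.inl i))).1, fun c => ?_,
    fun c hc => ?_⟩
  · calc #{i | (f (.inl i)).1 = c} ≤ #(range (s c)) := by
          refine card_le_card_of_injOn (fun i => (f (.inl i)).2) (fun i hi => ?_) ?_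
          · have := mem_sigma.1 (hf (.inl i))
            simp_all
          · intro i hi j hj hij
            simp only [coe_filter, mem_univ, true_and, Set.mem_ofPred_eq] at hi hj
            exact Sum.inl_injective (hinj (Sigma.ext (hi.trans hj.symm) (heq_of_eq hij)))
      _ = s c := card_range _
  · have hcU : c ∈ univ.biUnion N := by
      have := hcover univ
      rw [card_univ] at this
      by_contra hcU
      have : 0 < #(M \ univ.biUnion N) := card_pos.2 ⟨c, mem_sdiff.2 ⟨hc, hcU⟩⟩
      omega
    obtain ⟨i | d, hx⟩ := hsurj ⟨c, 0⟩ (mem_sigma.2 ⟨hcU, mem_range.2 (hM c hc)⟩)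
    · exact ⟨i, congrArg Sigma.fst hx⟩
    · have := hf (.inr d)
      rw [hx] at this
      exact absurd (mem_image_of_mem _ hc) (mem_sdiff.1 this).2

end Capacitated

lemma sum_card_filter_mem_eq {ι α : Type*} [DecidableEq α] (ll : ι → Finset α) (W : Finset ι)
    (B : Finset α) :
    ∑ i ∈ W, #{c ∈ B | c ∈ ll i} = ∑ c ∈ B, #{i ∈ W | c ∈ ll i} :=
  sum_card_bipartiteAbove_eq_sum_card_bipartiteBelow (fun i c => c ∈ ll i)

lemma add_sum_le_card_filter_add_card {ι α : Type*} [DecidableEq α] (ll : ι → Finset α) (k : ℕ)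
    (hll : ∀ i, #(ll i) = k) (cap : α → ℕ) (W : Finset ι)
    (hdeg : ∀ c, #{i ∈ W | c ∈ ll i} + cap c ≤ k * cap c + 1) (c : α)
    (hW : ∑ c' ∈ W.biUnion (fun i => (ll i).erase c), cap c' < #W) :
    k + ∑ c' ∈ W.biUnion (fun i => (ll i).erase c), cap c' ≤
      #{i ∈ W | c ∈ ll i} + #(W.biUnion fun i => (ll i).erase c) := by
  set A := W.biUnion fun i => (ll i).erase c
  have hcount : k * #W = #{i ∈ W | c ∈ ll i} + ∑ c' ∈ A, #{i ∈ W | c' ∈ ll i} := by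
    have hsub (i) (hi : i ∈ W) : {c' ∈ insert c A | c' ∈ ll i} = ll i := by
      refine (filter_mem_eq_inter).trans (inter_eq_right.2 fun c' hc' => ?_)
      rcases eq_or_ne c' c with rfl | hne
      · exact mem_insert_self _ _
      · exact mem_insert_of_mem (mem_biUnion.2 ⟨i, hi, mem_erase.2 ⟨hne, hc'⟩⟩)
    have hcA : c ∉ A := by simp [A]
    calc k * #W = ∑ i ∈ W, #{c' ∈ insert c A | c' ∈ ll i} := by
          rw [sum_congr rfl fun i hi => by rw [hsub i hi, hll], sum_const, smul_eq_mul, mul_comm]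
      _ = _ := by rw [sum_card_filter_mem_eq, sum_insert hcA]
  have hA : ∑ c' ∈ A, (#{i ∈ W | c' ∈ ll i} + cap c') ≤ ∑ c' ∈ A, (k * cap c' + 1) :=
    sum_le_sum fun c' _ => hdeg c'
  rw [sum_add_distrib, sum_add_distrib, ← mul_sum, sum_const, smul_eq_mul, mul_one] at hA
  have : k * (∑ c' ∈ A, cap c' + 1) ≤ k * #W := Nat.mul_le_mul_left k hW
  rw [mul_add, mul_one] at this
  omega

lemma Nat.add_sub_one_div_le_div_add_one (e k : ℕ) : (e + k - 1) / k ≤ e / k + 1 := by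
  rcases k.eq_zero_or_pos with rfl | hk
  · simp
  · calc (e + k - 1) / k ≤ (e + k) / k := Nat.div_le_div_right (by omega)
      _ = e / k + 1 := Nat.add_div_right e hk

lemma Nat.add_sub_one_div_eq_ite {e k : ℕ} (he : 0 < e) (hek : e < 2 * k) :
    (e + k - 1) / k = if k < e then 2 else 1 := by
  split_ifs with h
  · exact Nat.div_eq_of_lt_le (by omega) (by omega)
  · exact Nat.div_eq_of_lt_le (by omega) (by omega)

lemma isProportionalColoring_of_forall_le {V : Type*} [Fintype V] (G : SimpleGraph V) (k : ℕ)
    (L : V → Finset ℕ) (f : V → ℕ) (hf : ∀ v, f v ∈ L v) (hG : ∀ u v, G.Adj u v → f u ≠ f v)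
    (hcount : ∀ c, (∃ v, c ∈ L v) →
      eta L c / k ≤ #{v | f v = c} ∧ #{v | f v = c} ≤ (eta L c + k - 1) / k) :
    IsProportionalColoring G k L f :=
  ⟨hf, hG, fun c hc => by
    have := Nat.add_sub_one_div_le_div_add_one (eta L c) k
    have := hcount c hc
    omega⟩

section Star

variable {ι : Type*} [Fintype ι]

lemma card_filter_sum_fin_one (p : Fin 1 ⊕ ι → Prop) [DecidablePred p] :
    #{v | p v} = (if p (.inl 0) then 1 else 0) + #{i | p (.inr i)} := by
  rw [card_filter, Fintype.sum_sum_type, Fin.sum_univ_one, card_filter]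

lemma eta_sum_fin_one (L : Fin 1 ⊕ ι → Finset ℕ) (c : ℕ) :
    eta L c = (if c ∈ L (.inl 0) then 1 else 0) + #{i | c ∈ L (.inr i)} :=
  card_filter_sum_fin_one _

lemma card_filter_leaf_le_eta (L : Fin 1 ⊕ ι → Finset ℕ) (c : ℕ) (W : Finset ι) :
    #{i ∈ W | c ∈ L (.inr i)} ≤ eta L c := by
  rw [eta_sum_fin_one]
  exact (card_le_card (filter_subset_filter _ (subset_univ W))).trans (Nat.le_add_left _ _)

lemma eta_le_card_add_one (L : Fin 1 ⊕ ι → Finset ℕ) (c : ℕ) : eta L c ≤ Fintype.card ι + 1 :=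
  (card_le_univ _).trans_eq (by simp [add_comm])

lemma le_card_filter_of_not_hall (L : Fin 1 ⊕ ι → Finset ℕ) (k : ℕ) (hL : ∀ v, #(L v) = k)
    (hk : Fintype.card ι + 2 ≤ 2 * k) (c : ℕ) (W : Finset ι)
    (hW : ∑ c' ∈ W.biUnion (fun i => (L (.inr i)).erase c), (eta L c' + k - 1) / k < #W) :
    k + #{c' ∈ W.biUnion (fun i => (L (.inr i)).erase c) | k < eta L c'} ≤
      #{i ∈ W | c ∈ L (.inr i)} := by
  set A := W.biUnion fun i => (L (.inr i)).erase c
  have hcap (c') : #{i ∈ W | c' ∈ L (.inr i)} + (eta L c' + k - 1) / k ≤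
      k * ((eta L c' + k - 1) / k) + 1 := by
    have hdeg := card_filter_leaf_le_eta L c' W
    have := eta_le_card_add_one L c'
    rcases (eta L c').eq_zero_or_pos with he | he
    · rw [he, zero_add, Nat.div_eq_of_lt (by omega)]
      omega
    · rw [Nat.add_sub_one_div_eq_ite he (by omega)]
      split_ifs <;> omega
  have hsum : ∑ c' ∈ A, (eta L c' + k - 1) / k = #A + #{c' ∈ A | k < eta L c'} := by
    rw [card_eq_sum_ones, card_filter, ← sum_add_distrib]
    refine sum_congr rfl fun c' hc' => ?_
    obtain ⟨i, -, hi⟩ := mem_biUnion.1 hc'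
    have hpos : 0 < eta L c' := (card_filter_leaf_le_eta L c' {i}).trans_lt'
      (card_pos.2 ⟨i, by simpa using mem_of_mem_erase hi⟩)
    have := eta_le_card_add_one L c'
    rw [Nat.add_sub_one_div_eq_ite hpos (by omega)]
    split_ifs <;> rfl
  have : k + ∑ c' ∈ A, (eta L c' + k - 1) / k ≤ #{i ∈ W | c ∈ L (.inr i)} + #A :=
    add_sum_le_card_filter_add_card (fun i => L (.inr i)) k (fun i => hL _) _ W hcap c hW
  rw [hsum] at this
  omega

/- If every colour `c` of the centre had a Hall violator `V c`, each would lie on at least `k + a c`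
leaves. For `c₀` minimising `a`, counting the pairs (leaf, centre colour on it) inside and outside
`V c₀` gives `k (k + a) ≤ |V c₀| (1 + a) + (m - |V c₀|) k` with `m = card ι`, impossible when
`m + 2 ≤ 2k`. -/
lemma exists_center_color_hall (L : Fin 1 ⊕ ι → Finset ℕ) (k : ℕ) (hL : ∀ v, #(L v) = k)
    (hk : Fintype.card ι + 2 ≤ 2 * k) :
    ∃ c₀ ∈ L (.inl 0), ∀ W : Finset ι,
      #W ≤ ∑ c ∈ W.biUnion (fun i => (L (.inr i)).erase c₀), (eta L c + k - 1) / k := by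
  classical
  by_contra! h
  choose! V hV using h
  set A := fun c => V c |>.biUnion fun i => (L (.inr i)).erase c
  set a := fun c => #{c' ∈ A c | k < eta L c'}
  have key (c) (hc : c ∈ L (.inl 0)) : k + a c ≤ #{i | c ∈ L (.inr i)} :=
    (le_card_filter_of_not_hall L k hL hk c (V c) (hV c hc)).trans
      (card_le_card (filter_subset_filter _ (subset_univ _)))
  have hheavy (c) (hc : c ∈ L (.inl 0)) : k < eta L c := by
    have := key c hc
    rw [eta_sum_fin_one, if_pos hc]
    omega
  obtain ⟨c₀, hc₀, hmin⟩ := exists_min_image (L (.inl 0)) a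
    (card_pos.1 (by rw [hL]; omega))
  set W := V c₀
  have hlow : k * (k + a c₀) ≤ ∑ i, #{c ∈ L (.inl 0) | c ∈ L (.inr i)} := by
    calc k * (k + a c₀) = ∑ _c ∈ L (.inl 0), (k + a c₀) := by rw [sum_const, hL, smul_eq_mul]
      _ ≤ ∑ c ∈ L (.inl 0), #{i | c ∈ L (.inr i)} :=
        sum_le_sum fun c hc => (Nat.add_le_add_left (hmin c hc) k).trans (key c hc)
      _ = _ := (sum_card_filter_mem_eq _ _ _).symm
  have hin (i) (hi : i ∈ W) : #{c ∈ L (.inl 0) | c ∈ L (.inr i)} ≤ 1 + a c₀ := by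
    refine (card_le_card fun c hc => ?_).trans ((card_insert_le c₀ _).trans_eq (add_comm _ _))
    obtain ⟨hcL, hci⟩ := mem_filter.1 hc
    rcases eq_or_ne c c₀ with rfl | hne
    · exact mem_insert_self _ _
    · exact mem_insert_of_mem (mem_filter.2
        ⟨mem_biUnion.2 ⟨i, hi, mem_erase.2 ⟨hne, hci⟩⟩, hheavy c hcL⟩)
  have hout (i) : #{c ∈ L (.inl 0) | c ∈ L (.inr i)} ≤ k := (card_filter_le _ _).trans_eq (hL _)
  have hup : ∑ i, #{c ∈ L (.inl 0) | c ∈ L (.inr i)} ≤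
      #W * (1 + a c₀) + (Fintype.card ι - #W) * k := by
    rw [← sum_add_sum_compl W, ← card_compl]
    exact add_le_add ((sum_le_sum hin).trans_eq (by simp))
      ((sum_le_sum fun i _ => hout i).trans_eq (by simp))
  have hw : k + a c₀ ≤ #W :=
    (le_card_filter_of_not_hall L k hL hk c₀ W (hV c₀ hc₀)).trans (card_filter_le _ _)
  obtain ⟨q, hq⟩ : ∃ q, Fintype.card ι = #W + q := ⟨_, (Nat.add_sub_of_le (card_le_univ W)).symm⟩
  rw [hq, Nat.add_sub_cancel_left] at hup
  nlinarith

lemma card_add_card_sdiff_le (L : Fin 1 ⊕ ι → Finset ℕ) (k : ℕ) (hL : ∀ v, #(L v) = k) (c₀ : ℕ)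
    (hc₀ : c₀ ∈ L (.inl 0)) (W : Finset ι) :
    #W + #({c ∈ univ.biUnion L | k ≤ eta L c}.erase c₀ \
      W.biUnion fun i => (L (.inr i)).erase c₀) ≤ Fintype.card ι := by
  classical
  set H := {c ∈ univ.biUnion L | k ≤ eta L c}.erase c₀ \ W.biUnion fun i => (L (.inr i)).erase c₀
  have hH (c) (hc : c ∈ H) : c ≠ c₀ ∧ k ≤ eta L c ∧ ∀ i ∈ W, c ∉ L (.inr i) := by
    simp only [H, mem_sdiff, mem_erase, mem_filter, mem_biUnion, not_exists, not_and] at hc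
    exact ⟨hc.1.1, hc.1.2.2, fun i hi hci => hc.2 i hi hc.1.1 hci⟩
  have hlow : #H * k ≤ ∑ c ∈ H, eta L c := by
    simpa using card_nsmul_le_sum H (eta L) k fun c hc => (hH c hc).2.1
  have hsplit : ∑ c ∈ H, eta L c ≤
      #{c ∈ H | c ∈ L (.inl 0)} + ∑ c ∈ H, #{i ∈ Wᶜ | c ∈ L (.inr i)} := by
    rw [sum_congr rfl fun c _ => eta_sum_fin_one L c, sum_add_distrib, ← card_filter]
    refine Nat.add_le_add_left (sum_le_sum fun c hc => card_le_card fun i hi => ?_) _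
    simp only [mem_filter, mem_univ, true_and, mem_compl] at hi ⊢
    exact ⟨fun hiW => (hH c hc).2.2 i hiW hi, hi⟩
  have hcenter : #{c ∈ H | c ∈ L (.inl 0)} ≤ k - 1 := by
    rw [← hL (.inl 0), ← card_erase_of_mem hc₀]
    refine card_le_card fun c hc => ?_
    simp only [mem_filter] at hc
    exact mem_erase.2 ⟨(hH c hc.1).1, hc.2⟩
  have hleaves : ∑ c ∈ H, #{i ∈ Wᶜ | c ∈ L (.inr i)} ≤ (Fintype.card ι - #W) * k := by
    rw [← sum_card_filter_mem_eq, ← card_compl, ← smul_eq_mul, ← sum_const]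
    exact sum_le_sum fun i _ => (card_le_card fun c hc => (mem_filter.1 hc).2).trans_eq (hL _)
  by_contra! hcon
  have := card_le_univ W
  have : (Fintype.card ι - #W + 1) * k ≤ #H * k := Nat.mul_le_mul_right k (by omega)
  rw [add_one_mul] at this
  have : 0 < k := hL (.inl 0) ▸ card_pos.2 ⟨c₀, hc₀⟩
  omega

theorem proportionallyChoosable_star (k : ℕ) (hk : Fintype.card ι + 2 ≤ 2 * k) :
    ProportionallyChoosable (completeBipartiteGraph (Fin 1) ι) k := by
  classical
  intro L hL
  obtain ⟨c₀, hc₀, hall⟩ := exists_center_color_hall L k hL hk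
  obtain ⟨g, hgL, hgcap, hgM⟩ := exists_capacitated_assignment (fun i => (L (.inr i)).erase c₀)
    (fun c => (eta L c + k - 1) / k) ({c ∈ univ.biUnion L | k ≤ eta L c}.erase c₀)
    (fun c hc => Nat.div_pos (by have := (mem_filter.1 (mem_of_mem_erase hc)).2; omega)
      (by omega)) hall (card_add_card_sdiff_le L k hL c₀ hc₀)
  have hgc₀ (i) : g i ≠ c₀ := ne_of_mem_erase (hgL i)
  have husage (c) : #{v | Sum.elim (fun _ => c₀) g v = c} =
      (if c₀ = c then 1 else 0) + #{i | g i = c} :=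
    card_filter_sum_fin_one _
  refine ⟨Sum.elim (fun _ => c₀) g, isProportionalColoring_of_forall_le _ _ _ _ ?_ ?_ ?_⟩
  · rintro (a | i)
    · rwa [Fin.fin_one_eq_zero a]
    · exact mem_of_mem_erase (hgL i)
  · rintro (a | i) (b | j) hadj <;> simp at hadj
    · exact (hgc₀ j).symm
    · exact hgc₀ i
  · rintro c ⟨v, hv⟩
    have hpos : 0 < eta L c := card_pos.2 ⟨v, by simpa⟩
    have hlt : eta L c < 2 * k := by have := eta_le_card_add_one L c; omega
    have hfloor : eta L c / k ≤ if k ≤ eta L c then 1 else 0 := by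
      split_ifs with h
      · exact Nat.lt_succ_iff.1 ((Nat.div_lt_iff_lt_mul (by omega)).2 (by omega))
      · exact (Nat.div_eq_of_lt (by omega)).le
    rw [husage, Nat.add_sub_one_div_eq_ite hpos hlt]
    rcases eq_or_ne c₀ c with rfl | hne
    · rw [if_pos rfl, card_eq_zero.2 (filter_eq_empty_iff.2 fun i _ => hgc₀ i)]
      split_ifs at hfloor ⊢ <;> omega
    · have hcap := hgcap c
      have hcover (h : k ≤ eta L c) : 0 < #{i | g i = c} := by
        obtain ⟨i, hi⟩ := hgM c (mem_erase.2 ⟨hne.symm, mem_filter.2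
          ⟨mem_biUnion.2 ⟨v, mem_univ v, hv⟩, h⟩⟩)
        exact card_pos.2 ⟨i, by simpa using hi⟩
      rw [if_neg hne, zero_add]
      rw [Nat.add_sub_one_div_eq_ite hpos hlt] at hcap
      split_ifs at hfloor hcap ⊢ <;> omega

theorem not_proportionallyChoosable_star (k : ℕ) (hk : 2 * k ≤ Fintype.card ι + 1) :
    ¬ ProportionallyChoosable (completeBipartiteGraph (Fin 1) ι) k := by
  classical
  intro h
  obtain ⟨f, hf, hG, hprop⟩ := h (fun _ => range k) fun _ => card_range k
  have hk0 : 0 < k := (Nat.zero_le _).trans_lt (mem_range.1 (hf (.inl 0)))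
  have hused : #{v | f v = f (.inl 0)} = 1 := by
    rw [card_filter_sum_fin_one, if_pos rfl, card_eq_zero.2 (filter_eq_empty_iff.2
      fun i _ => (hG (.inl 0) (.inr i) (by simp)).symm)]
  have heta : eta (fun _ : Fin 1 ⊕ ι => range k) (f (.inl 0)) = Fintype.card ι + 1 := by
    simp [eta, mem_range.1 (hf (.inl 0)), add_comm]
  have htwo : 2 ≤ (Fintype.card ι + 1) / k := (Nat.le_div_iff_mul_le hk0).2 (by omega)
  have := Nat.div_le_div_right (c := k)
    (show Fintype.card ι + 1 ≤ Fintype.card ι + 1 + k - 1 by omega)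
  rcases hprop (f (.inl 0)) ⟨.inl 0, hf _⟩ with h | h <;> rw [hused, heta] at h <;> omega

end Star

theorem stmt_19_general (m : ℕ) :
    propChoiceNumber (completeBipartiteGraph (Fin 1) (Fin m)) = 1 + (m + 1) / 2 := by
  have hchoosable := proportionallyChoosable_star (ι := Fin m) (1 + (m + 1) / 2) (by simp; omega)
  refine le_antisymm (Nat.sInf_le hchoosable) (le_csInf ⟨_, hchoosable⟩ fun k hk => ?_)
  by_contra! hlt
  exact not_proportionallyChoosable_star k (by simp; omega) hk

theorem stmt_19 (m : ℕ) (hm : 0 < m) :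
    propChoiceNumber (completeBipartiteGraph (Fin 1) (Fin m)) = 1 + (m + 1) / 2 :=
  stmt_19_general m
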